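/- arXiv:1808.07693 — 2 statements merged into one kernel-verified Lean document; each statement's English description precedes it below -/
import Mathlib

section
/- Every skew category of partitions contains the partition p̂ := ker((1,1,2),(2,1,1)) ∈ P(3,3). -/
attribute [local instance] Classical.propDecidable

noncomputable section

namespace GTQG

/-! ## Partitions -/

/-- The set `P(k,l)` of partitions of `{1,…,k,1',…,l'}`, encoded as equivalence
relations (i.e. set partitions) on the disjoint union `Fin k ⊕ Fin l`. -/
abbrev Part (k l : ℕ) : Type := Setoid (Fin k ⊕ Fin l)

/-- `ker(i,j)`: the partition whose blocks are the fibers of the labelling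
`x ↦ i x` on upper points and `y ↦ j y` on lower points. -/
def kerPartA {α : Type*} {k l : ℕ} (i : Fin k → α) (j : Fin l → α) : Part k l :=
  Setoid.ker (Sum.elim i j)

/-- `ker(i,j)` for `ℕ`-valued multi-indices. -/
abbrev kerPart {k l : ℕ} (i : Fin k → ℕ) (j : Fin l → ℕ) : Part k l := kerPartA i j

/-- `ker(i) = ker(i,∅) ∈ P(k,0)`. -/
def kerPart0 {k : ℕ} (i : Fin k → ℕ) : Part k 0 := kerPartA i Fin.elim0

/-- The pair partition `⊔ ∈ P(0,2)`. -/
def pairPart : Part 0 2 := kerPartA Fin.elim0 (fun _ => (1 : ℕ))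

/-- The identity partition `| ∈ P(1,1)`. -/
def idPart : Part 1 1 := kerPartA (fun _ => (1 : ℕ)) (fun _ => (1 : ℕ))

/-- The partition `p̂ = ker((1,1,2),(2,1,1)) ∈ P(3,3)`. -/
def pHat : Part 3 3 := kerPart ![1, 1, 2] ![2, 1, 1]

/-- The involution `p* ∈ P(l,k)`, turning `p` upside-down. -/
def invol {k l : ℕ} (p : Part k l) : Part l k := Setoid.comap Sum.swap p

/-- The number of blocks of a partition. -/
def blockCount {k l : ℕ} (p : Part k l) : ℕ := Nat.card (Quotient p)

/-- The restriction of `p` to its upper row. -/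
def upperSetoid {k l : ℕ} (p : Part k l) : Setoid (Fin k) := Setoid.comap Sum.inl p

/-- The restriction of `p` to its lower row. -/
def lowerSetoid {k l : ℕ} (p : Part k l) : Setoid (Fin l) := Setoid.comap Sum.inr p

/-- `p ∈ P(k,l)` and `q ∈ P(l,l')` are compatible if the lower row of `p`
and the upper row of `q` have the same block structure
(i.e. `j^(p) ∈ S_∞(i^(q))`). -/
def Compatible {k l l' : ℕ} (p : Part k l) (q : Part l l') : Prop :=
  lowerSetoid p = upperSetoid q

section Comp

variable {k l l' : ℕ}

/-- The points of the vertical concatenation of `p ∈ P(k,l)` and `q ∈ P(l,l')`: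
`k` upper points, `l` middle points, `l'` lower points. -/
abbrev CompCarrier (k l l' : ℕ) : Type := Fin k ⊕ (Fin l ⊕ Fin l')

/-- Inclusion of the points of `p` into the vertical concatenation. -/
def topIncl : Fin k ⊕ Fin l → CompCarrier k l l' := Sum.map id Sum.inl

/-- Inclusion of the points of `q` into the vertical concatenation. -/
def botIncl : Fin l ⊕ Fin l' → CompCarrier k l l' := Sum.inr

/-- Two points of the vertical concatenation are directly connected if they are
connected by a string of `p` or by a string of `q`. -/
def compRel (p : Part k l) (q : Part l l') :
    CompCarrier k l l' → CompCarrier k l l' → Prop := fun x y =>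
  (∃ u v, p u v ∧ x = topIncl u ∧ y = topIncl v) ∨
  (∃ u v, q u v ∧ x = botIncl u ∧ y = botIncl v)

/-- The partition of all points of the vertical concatenation of `p` and `q`
into connected components. -/
def middleJoin (p : Part k l) (q : Part l l') : Setoid (CompCarrier k l l') :=
  Relation.EqvGen.setoid (compRel p q)

/-- The composition `qp ∈ P(k,l')`: vertical concatenation with all loops removed. -/
def compPart (p : Part k l) (q : Part l l') : Part k l' :=
  Setoid.comap (Sum.map id Sum.inr) (middleJoin p q)

/-- A point of the vertical concatenation is a middle point. -/
def IsMiddle (x : CompCarrier k l l') : Prop := ∃ m : Fin l, x = Sum.inr (Sum.inl m)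

/-- The number `l(q,p)` of loops in the vertical concatenation of `p` and `q`:
connected components consisting entirely of middle points. -/
def loopCount (p : Part k l) (q : Part l l') : ℕ :=
  Nat.card {c : Quotient (middleJoin p q) //
    ∀ x : CompCarrier k l l', Quotient.mk (middleJoin p q) x = c → IsMiddle x}

end Comp

/-- The direct sum of two set partitions. -/
def sumSetoid {α β : Type*} (p : Setoid α) (q : Setoid β) : Setoid (α ⊕ β) :=
  Setoid.ker (Sum.map (Quotient.mk p) (Quotient.mk q))

/-- The tensor product `p ⊗ q ∈ P(k+k',l+l')`: horizontal concatenation. -/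
def tensorPart {k l k' l' : ℕ} (p : Part k l) (q : Part k' l') : Part (k + k') (l + l') :=
  Setoid.comap
    (Sum.elim
      (fun z => Fin.addCases (fun a => Sum.inl (Sum.inl a)) (fun b => Sum.inr (Sum.inl b)) z)
      (fun z => Fin.addCases (fun a => Sum.inl (Sum.inr a)) (fun b => Sum.inr (Sum.inr b)) z))
    (sumSetoid p q)

/-! ## Rotations -/

/-- Rotating the outermost left upper leg to the lower row (reindexing map). -/
def rotULDmap (k l : ℕ) : Fin k ⊕ Fin (l + 1) → Fin (k + 1) ⊕ Fin l
  | .inl x => .inl x.succ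
  | .inr y => Fin.cases (Sum.inl 0) (fun i => Sum.inr i) y

/-- Rotating the outermost left upper leg to the lower row. -/
def rotULD {k l : ℕ} (p : Part (k + 1) l) : Part k (l + 1) :=
  Setoid.comap (rotULDmap k l) p

/-- Rotating the outermost left lower leg to the upper row (reindexing map). -/
def rotDLUmap (k l : ℕ) : Fin (k + 1) ⊕ Fin l → Fin k ⊕ Fin (l + 1)
  | .inl x => Fin.cases (Sum.inr 0) (fun i => Sum.inl i) x
  | .inr y => .inr y.succ

/-- Rotating the outermost left lower leg to the upper row. -/
def rotDLU {k l : ℕ} (p : Part k (l + 1)) : Part (k + 1) l :=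
  Setoid.comap (rotDLUmap k l) p

/-- Rotating the outermost right upper leg to the lower row (reindexing map). -/
def rotURDmap (k l : ℕ) : Fin k ⊕ Fin (l + 1) → Fin (k + 1) ⊕ Fin l
  | .inl x => .inl x.castSucc
  | .inr y => Fin.lastCases (Sum.inl (Fin.last k)) (fun i => Sum.inr i) y

/-- Rotating the outermost right upper leg to the lower row. -/
def rotURD {k l : ℕ} (p : Part (k + 1) l) : Part k (l + 1) :=
  Setoid.comap (rotURDmap k l) p

/-- Rotating the outermost right lower leg to the upper row (reindexing map). -/
def rotDRUmap (k l : ℕ) : Fin (k + 1) ⊕ Fin l → Fin k ⊕ Fin (l + 1)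
  | .inl x => Fin.lastCases (Sum.inr (Fin.last l)) (fun i => Sum.inl i) x
  | .inr y => .inr y.castSucc

/-- Rotating the outermost right lower leg to the upper row. -/
def rotDRU {k l : ℕ} (p : Part k (l + 1)) : Part (k + 1) l :=
  Setoid.comap (rotDRUmap k l) p

/-- One basic rotation step between partitions (with varying numbers of
upper and lower points). -/
inductive BasicRot : (Σ k l : ℕ, Part k l) → (Σ k l : ℕ, Part k l) → Prop
  | uld {k l : ℕ} (p : Part (k + 1) l) : BasicRot ⟨k + 1, l, p⟩ ⟨k, l + 1, rotULD p⟩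
  | dlu {k l : ℕ} (p : Part k (l + 1)) : BasicRot ⟨k, l + 1, p⟩ ⟨k + 1, l, rotDLU p⟩
  | urd {k l : ℕ} (p : Part (k + 1) l) : BasicRot ⟨k + 1, l, p⟩ ⟨k, l + 1, rotURD p⟩
  | dru {k l : ℕ} (p : Part k (l + 1)) : BasicRot ⟨k, l + 1, p⟩ ⟨k + 1, l, rotDRU p⟩

/-- `IsRotationOf q p`: `q` is obtained from `p` by finitely many basic rotations. -/
def IsRotationOf (q p : Σ k l : ℕ, Part k l) : Prop := Relation.ReflTransGen BasicRot p q

/-- A family `R ⊆ P` is closed under rotation. -/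
def RotationClosed (R : ∀ k l : ℕ, Set (Part k l)) : Prop :=
  ∀ {k l k' l' : ℕ} (p : Part k l) (q : Part k' l'),
    p ∈ R k l → IsRotationOf ⟨k', l', q⟩ ⟨k, l, p⟩ → q ∈ R k' l'

/-! ## (Skew) categories of partitions -/

/-- A skew category of partitions: a collection `R ⊆ P` containing `⊔` and `|`,
closed under involution, connected tensor products and conditioned composition. -/
structure IsSkewCategory (R : ∀ k l : ℕ, Set (Part k l)) : Prop where
  pair_mem : pairPart ∈ R 0 2
  id_mem : idPart ∈ R 1 1
  invol_mem : ∀ {k l : ℕ} {p : Part k l}, p ∈ R k l → invol p ∈ R l k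
  conn_tensor_mem : ∀ {k l k' l' : ℕ} {p : Part k l} {q : Part k' l'}
      (i : Fin k → ℕ) (j : Fin l → ℕ) (f : Fin k' → ℕ) (g : Fin l' → ℕ),
      p ∈ R k l → q ∈ R k' l' → kerPart i j = p → kerPart f g = q →
      kerPart (Fin.append i f) (Fin.append j g) ∈ R (k + k') (l + l')
  cond_comp_mem : ∀ {k l l' : ℕ} {p : Part k l} {q : Part l l'},
      p ∈ R k l → q ∈ R l l' → Compatible p q → compPart p q ∈ R k l'

/-- A category of partitions: a collection `C ⊆ P` containing `⊔` and `|`,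
closed under involution, tensor products and composition. -/
structure IsCategoryOfPartitions (C : ∀ k l : ℕ, Set (Part k l)) : Prop where
  pair_mem : pairPart ∈ C 0 2
  id_mem : idPart ∈ C 1 1
  invol_mem : ∀ {k l : ℕ} {p : Part k l}, p ∈ C k l → invol p ∈ C l k
  tensor_mem : ∀ {k l k' l' : ℕ} {p : Part k l} {q : Part k' l'},
      p ∈ C k l → q ∈ C k' l' → tensorPart p q ∈ C (k + k') (l + l')
  comp_mem : ∀ {k l l' : ℕ} {p : Part k l} {q : Part l l'},
      p ∈ C k l → q ∈ C l l' → compPart p q ∈ C k l'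

/-- The skew category of partitions generated by a family `E`. -/
def skewGenerated (E : ∀ k l : ℕ, Set (Part k l)) : ∀ k l : ℕ, Set (Part k l) :=
  fun k l => { p | ∀ R : ∀ k l : ℕ, Set (Part k l),
    IsSkewCategory R → (∀ k' l' : ℕ, E k' l' ⊆ R k' l') → p ∈ R k l }

/-- The category of partitions generated by a family `E`. -/
def catGenerated (E : ∀ k l : ℕ, Set (Part k l)) : ∀ k l : ℕ, Set (Part k l) :=
  fun k l => { p | ∀ C : ∀ k l : ℕ, Set (Part k l),
    IsCategoryOfPartitions C → (∀ k' l' : ℕ, E k' l' ⊆ C k' l') → p ∈ C k l }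

end GTQG
namespace GTQG

/-! ## The free products `ℤ₂^{*∞}` and `ℤ₂^{*n}` -/

/-- The cyclic group of order two (written multiplicatively). -/
abbrev Z2 : Type := Multiplicative (ZMod 2)

/-- `ℤ₂^{*∞}`, the free product of countably many copies of `ℤ₂`. -/
abbrev FreeZ2 : Type := Monoid.CoprodI (fun _ : ℕ => Z2)

/-- `ℤ₂^{*n}`, the free product of `n` copies of `ℤ₂`. -/
abbrev FreeZ2n (n : ℕ) : Type := Monoid.CoprodI (fun _ : Fin n => Z2)

/-- The generator `a_i` of `ℤ₂^{*∞}`. -/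
def gen (i : ℕ) : FreeZ2 := Monoid.CoprodI.of (i := i) (Multiplicative.ofAdd (1 : ZMod 2))

/-- The generator `a_i` of `ℤ₂^{*n}`. -/
def genn {n : ℕ} (i : Fin n) : FreeZ2n n :=
  Monoid.CoprodI.of (i := i) (Multiplicative.ofAdd (1 : ZMod 2))

/-- The word `a_i = a_{i₁} ⋯ a_{i_k} ∈ ℤ₂^{*∞}` associated to a multi-index. -/
def aWord {k : ℕ} (i : Fin k → ℕ) : FreeZ2 := (List.ofFn fun x => gen (i x)).prod

/-- The word `a_i = a_{i₁} ⋯ a_{i_k} ∈ ℤ₂^{*n}` associated to a multi-index. -/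
def aWordn {n k : ℕ} (i : Fin k → Fin n) : FreeZ2n n := (List.ofFn fun x => genn (i x)).prod

/-- The natural embedding `ℤ₂^{*n} → ℤ₂^{*∞}`. -/
def incl (n : ℕ) : FreeZ2n n →* FreeZ2 :=
  Monoid.CoprodI.lift (fun i => Monoid.CoprodI.of (M := fun _ : ℕ => Z2) (i := (i : ℕ)))

/-- The endomorphism of `ℤ₂^{*∞}` induced by a map `σ : ℕ → ℕ`, `a_i ↦ a_{σ i}`.
For bijective `σ` this is the action of `S_∞`, in general that of `sS_∞`. -/
def permEndo (σ : ℕ → ℕ) : FreeZ2 →* FreeZ2 :=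
  Monoid.CoprodI.lift (fun i => Monoid.CoprodI.of (M := fun _ : ℕ => Z2) (i := σ i))

/-- The endomorphism of `ℤ₂^{*n}` induced by a map `σ : Fin n → Fin n`. -/
def permEndon {n : ℕ} (σ : Fin n → Fin n) : FreeZ2n n →* FreeZ2n n :=
  Monoid.CoprodI.lift (fun i => Monoid.CoprodI.of (M := fun _ : Fin n => Z2) (i := σ i))

/-- A map `ℕ → ℕ` is finitely supported (moves only finitely many points). -/
def FinitelySupported (σ : ℕ → ℕ) : Prop := {x | σ x ≠ x}.Finite

/-- `F_∞(D) = S_∞({a_{ind(p)} : p ∈ D(k,0)})`, the set of all words `a_i` with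
`ker(i) ∈ D(k,0)` (the `S_∞`-orbit of the words of minimal-index labellings). -/
def Finfty (D : ∀ k l : ℕ, Set (Part k l)) : Set FreeZ2 :=
  { g | ∃ (k : ℕ) (i : Fin k → ℕ), kerPart0 i ∈ D k 0 ∧ g = aWord i }

end GTQG
namespace GTQG

/-! ## The maps `T̂_p` and `T_p` -/

/-- `(ℂ^n)^{⊗k}`, realised as functions on multi-indices (the standard basis
`e_{i₁} ⊗ ⋯ ⊗ e_{i_k}` is indexed by multi-indices `i ∈ {1,…,n}^k`). -/
abbrev MV (n k : ℕ) : Type := (Fin k → Fin n) → ℂ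

/-- `δ̂_p(i,j) = 1` iff `(i,j) ∈ S_∞(ind(p))`, i.e. iff `ker(i,j) = p`. -/
def hatDelta {k l : ℕ} (p : Part k l) {n : ℕ} (i : Fin k → Fin n) (j : Fin l → Fin n) : ℂ :=
  if kerPartA i j = p then 1 else 0

/-- `δ_p(i,j) = 1` iff `(i,j) ∈ sS_∞(ind(p))`, i.e. iff the labelling `(i,j)`
is constant on the blocks of `p`. -/
def softDelta {k l : ℕ} (p : Part k l) {n : ℕ} (i : Fin k → Fin n) (j : Fin l → Fin n) : ℂ :=
  if p ≤ kerPartA i j then 1 else 0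

/-- The linear map `T̂_p^(n) : (ℂ^n)^{⊗k} → (ℂ^n)^{⊗l}`. -/
def hatT (n : ℕ) {k l : ℕ} (p : Part k l) : MV n k →ₗ[ℂ] MV n l :=
  Matrix.mulVecLin (Matrix.of fun (j : Fin l → Fin n) (i : Fin k → Fin n) => hatDelta p i j)

/-- The linear map `T_p^(n) : (ℂ^n)^{⊗k} → (ℂ^n)^{⊗l}` of Banica–Speicher. -/
def softT (n : ℕ) {k l : ℕ} (p : Part k l) : MV n k →ₗ[ℂ] MV n l :=
  Matrix.mulVecLin (Matrix.of fun (j : Fin l → Fin n) (i : Fin k → Fin n) => softDelta p i j)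

/-- The tensor product of linear maps, under the identification
`(ℂ^n)^{⊗k} ⊗ (ℂ^n)^{⊗k'} ≅ (ℂ^n)^{⊗(k+k')}` of basis vectors
`(e_{i} ⊗ e_{f} ↦ e_{if}`, concatenation of multi-indices). -/
def tensorMap {n k l k' l' : ℕ} (S : MV n k →ₗ[ℂ] MV n l) (T : MV n k' →ₗ[ℂ] MV n l') :
    MV n (k + k') →ₗ[ℂ] MV n (l + l') :=
  Matrix.mulVecLin (Matrix.of fun (x : Fin (l + l') → Fin n) (y : Fin (k + k') → Fin n) =>
    LinearMap.toMatrix' S (fun a => x (Fin.castAdd l' a)) (fun a => y (Fin.castAdd k' a)) *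
    LinearMap.toMatrix' T (fun b => x (Fin.natAdd l b)) (fun b => y (Fin.natAdd k b)))

/-- The adjoint of a linear map `(ℂ^n)^{⊗k} → (ℂ^n)^{⊗l}` with respect to the
standard Hermitian inner products (conjugate-transpose of the matrix in the
standard bases). -/
def adjointMap {n k l : ℕ} (S : MV n k →ₗ[ℂ] MV n l) : MV n l →ₗ[ℂ] MV n k :=
  Matrix.mulVecLin (LinearMap.toMatrix' S).conjTranspose

/-- The map `ζ : ℂ → (ℂ^n)^{⊗2}`, `1 ↦ Σᵢ eᵢ ⊗ eᵢ`. -/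
def zetaMap (n : ℕ) : MV n 0 →ₗ[ℂ] MV n 2 :=
  Matrix.mulVecLin (Matrix.of fun (j : Fin 2 → Fin n) (_ : Fin 0 → Fin n) =>
    if j 0 = j 1 then (1 : ℂ) else 0)

/-- A tensor category with duals (of subspaces of `Hom((ℂ^n)^{⊗k}, (ℂ^n)^{⊗l})`). -/
structure IsTensorCategoryWithDuals (n : ℕ)
    (H : ∀ k l : ℕ, Submodule ℂ (MV n k →ₗ[ℂ] MV n l)) : Prop where
  tensor_mem : ∀ {k l k' l' : ℕ} (S : MV n k →ₗ[ℂ] MV n l) (T : MV n k' →ₗ[ℂ] MV n l'),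
      S ∈ H k l → T ∈ H k' l' → tensorMap S T ∈ H (k + k') (l + l')
  comp_mem : ∀ {k l l' : ℕ} (S : MV n k →ₗ[ℂ] MV n l) (T : MV n l →ₗ[ℂ] MV n l'),
      S ∈ H k l → T ∈ H l l' → T ∘ₗ S ∈ H k l'
  adjoint_mem : ∀ {k l : ℕ} (S : MV n k →ₗ[ℂ] MV n l), S ∈ H k l → adjointMap S ∈ H l k
  id_mem : LinearMap.id ∈ H 1 1
  zeta_mem : zetaMap n ∈ H 0 2

/-- The collection of subspaces `span{T̂_p^(n) : p ∈ R(k,l)}`. -/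
def spanOf (n : ℕ) (R : ∀ k l : ℕ, Set (Part k l)) :
    ∀ k l : ℕ, Submodule ℂ (MV n k →ₗ[ℂ] MV n l) :=
  fun k l => Submodule.span ℂ {T | ∃ p ∈ R k l, T = hatT n p}

/-- All connected tensor products of `p` and `q`. -/
def connTensorSet {k l k' l' : ℕ} (p : Part k l) (q : Part k' l') :
    Set (Part (k + k') (l + l')) :=
  { r | ∃ (i : Fin k → ℕ) (j : Fin l → ℕ) (f : Fin k' → ℕ) (g : Fin l' → ℕ),
      kerPart i j = p ∧ kerPart f g = q ∧ r = kerPart (Fin.append i f) (Fin.append j g) }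

/-- All connected conditioned compositions of `p` and `q`. -/
def connCompSet {k l l' : ℕ} (p : Part k l) (q : Part l l') : Set (Part k l') :=
  { r | ∃ (i : Fin k → ℕ) (h : Fin l → ℕ) (g : Fin l' → ℕ),
      kerPart i h = p ∧ kerPart h g = q ∧ r = kerPart i g }

end GTQG
namespace GTQG

/-! `p̂` is a connected tensor product of `⊔*`, `|` and `⊔`: labelling both `⊔*` and `⊔` by `1`
and `|` by `2` merges the cap and the cup into the single block `{1, 2, 2', 3'}`. -/

theorem kerPartA_eq_kerPartA {α β : Type*} {k l : ℕ} {i : Fin k → α} {j : Fin l → α}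
    {i' : Fin k → β} {j' : Fin l → β}
    (h : ∀ x y, Sum.elim i j x = Sum.elim i j y ↔ Sum.elim i' j' x = Sum.elim i' j' y) :
    kerPartA i j = kerPartA i' j' :=
  Setoid.ext h

theorem invol_kerPartA {α : Type*} {k l : ℕ} (i : Fin k → α) (j : Fin l → α) :
    invol (kerPartA i j) = kerPartA j i :=
  Setoid.ext fun x y => by cases x <;> cases y <;> rfl

theorem IsSkewCategory.kerPart_append_mem {R : ∀ k l : ℕ, Set (Part k l)}
    (hR : IsSkewCategory R)
    {k l k' l' : ℕ} {i : Fin k → ℕ} {j : Fin l → ℕ} {f : Fin k' → ℕ} {g : Fin l' → ℕ}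
    (hij : kerPart i j ∈ R k l) (hfg : kerPart f g ∈ R k' l') :
    kerPart (Fin.append i f) (Fin.append j g) ∈ R (k + k') (l + l') :=
  hR.conn_tensor_mem i j f g hij hfg rfl rfl

theorem pairPart_eq : pairPart = kerPart ![] ![1, 1] := kerPartA_eq_kerPartA (by decide)

theorem idPart_eq : idPart = kerPart ![2] ![2] := kerPartA_eq_kerPartA (by decide)

theorem pHat_eq :
    pHat = kerPart (Fin.append (Fin.append ![1, 1] ![2]) ![])
      (Fin.append (Fin.append ![] ![2]) ![1, 1]) :=
  kerPartA_eq_kerPartA (by decide)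

/-- Every skew category of partitions contains
`p̂ = ker((1,1,2),(2,1,1)) ∈ P(3,3)`. -/
theorem skewCategory_pHat_mem (R : ∀ k l : ℕ, Set (Part k l))
    (hR : IsSkewCategory R) : pHat ∈ R 3 3 := by
  have hcup : kerPart ![] ![1, 1] ∈ R 0 2 := pairPart_eq ▸ hR.pair_mem
  have hcap : kerPart ![1, 1] ![] ∈ R 2 0 := by
    simpa only [invol_kerPartA] using hR.invol_mem hcup
  have hid : kerPart ![2] ![2] ∈ R 1 1 := idPart_eq ▸ hR.id_mem
  rw [pHat_eq]
  exact hR.kerPart_append_mem (hR.kerPart_append_mem hcap hid) hcup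

end GTQG
end
end

section
/- For every S_∞-invariant normal subgroup N ⊴ ℤ₂^{*∞}, the set {p ∈ P : p is a rotation of ker(i) for some k ∈ ℕ₀ and some i ∈ ℕ^k with a_i ∈ N} is a skew category of partitions, and its associated subgroup F_∞ of ℤ₂^{*∞} equals N. -/
attribute [local instance] Classical.propDecidable

noncomputable section

namespace GTQG

/-- The set of all partitions that are rotations of some `ker(i)` with `a_i ∈ N`. -/
def rotSetOf (N : Set FreeZ2) : ∀ k l : ℕ, Set (Part k l) := fun k l =>
  { p | ∃ (k' : ℕ) (i : Fin k' → ℕ), aWord i ∈ N ∧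
      IsRotationOf ⟨k, l, p⟩ ⟨k', 0, kerPart0 i⟩ }

/-!
For a labelling `(i, j)` of a partition `p = ker(i, j)`, `p` lies in `rotSetOf N` iff
`a_i a_j⁻¹ ∈ N`. Rotating a leftmost leg conjugates this word by a generator and rotating a
rightmost leg leaves it unchanged (as `a_c² = 1`), so by normality every rotation of some
`ker(i)` with `a_i ∈ N` has a labelling whose word lies in `N`; conversely every `ker(i, j)` is a
rotation of `ker(i j')`, with `j'` the reverse of `j` and `a_{i j'} = a_i a_j⁻¹`. Two labellings
with the same kernel differ by a finitely supported permutation, so by `S_∞`-invariance the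
criterion holds for every labelling. The axioms then reduce to identities in `ℤ₂^{*∞}`: the
involution inverts the word, a connected tensor product gives `a_i (a_f a_g⁻¹) a_i⁻¹ · a_i a_j⁻¹`,
and a conditioned composition, once `q` is relabelled so that its upper labels are the lower
labels `h` of `p` and its remaining labels avoid those of `p`, gives `a_i a_h⁻¹ · a_h a_g⁻¹`.
Finally `F_∞ = N` because every element of `ℤ₂^{*∞}` is a word `a_i`.
-/

lemma kerPart_eq_ker {k l : ℕ} (i : Fin k → ℕ) (j : Fin l → ℕ) :
    kerPart i j = Setoid.ker (Sum.elim i j) := rfl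

lemma kerPart_elim0 {k : ℕ} (i : Fin k → ℕ) (j : Fin 0 → ℕ) : kerPart i j = kerPart0 i := by
  rw [Subsingleton.elim j Fin.elim0]; rfl

lemma kerPart_comp_of_injOn {k l : ℕ} {i : Fin k → ℕ} {j : Fin l → ℕ} {τ : ℕ → ℕ}
    (hτ : Set.InjOn τ (Set.range (Sum.elim i j))) : kerPart (τ ∘ i) (τ ∘ j) = kerPart i j := by
  ext x y
  rw [kerPart_eq_ker, kerPart_eq_ker, Setoid.ker_def, Setoid.ker_def, ← Sum.comp_elim]
  exact hτ.eq_iff (Set.mem_range_self x) (Set.mem_range_self y)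

lemma invol_kerPart {k l : ℕ} (i : Fin k → ℕ) (j : Fin l → ℕ) :
    invol (kerPart i j) = kerPart j i :=
  congrArg Setoid.ker Sum.elim_swap

lemma rotULD_kerPart_cons {k l : ℕ} (c : ℕ) (i : Fin k → ℕ) (j : Fin l → ℕ) :
    rotULD (kerPart (Fin.cons c i) j) = kerPart i (Fin.cons c j) := by
  refine congrArg Setoid.ker (funext fun x => ?_)
  rcases x with a | b
  · rfl
  · cases b using Fin.cases <;> rfl

lemma rotDLU_kerPart_cons {k l : ℕ} (c : ℕ) (i : Fin k → ℕ) (j : Fin l → ℕ) :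
    rotDLU (kerPart i (Fin.cons c j)) = kerPart (Fin.cons c i) j := by
  refine congrArg Setoid.ker (funext fun x => ?_)
  rcases x with a | b
  · cases a using Fin.cases <;> rfl
  · rfl

lemma rotURD_kerPart_snoc {k l : ℕ} (i : Fin k → ℕ) (c : ℕ) (j : Fin l → ℕ) :
    rotURD (kerPart (Fin.snoc i c) j) = kerPart i (Fin.snoc j c) := by
  refine congrArg Setoid.ker (funext fun x => ?_)
  rcases x with a | b
  · simp [rotURDmap]
  · cases b using Fin.lastCases <;> simp [rotURDmap]

lemma rotDRU_kerPart_snoc {k l : ℕ} (i : Fin k → ℕ) (c : ℕ) (j : Fin l → ℕ) :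
    rotDRU (kerPart i (Fin.snoc j c)) = kerPart (Fin.snoc i c) j := by
  refine congrArg Setoid.ker (funext fun x => ?_)
  rcases x with a | b
  · cases a using Fin.lastCases <;> simp [rotDRUmap]
  · simp [rotDRUmap]

lemma gen_mul_self (i : ℕ) : gen i * gen i = 1 := by
  rw [gen, ← map_mul]
  exact (congrArg _ (by decide)).trans (map_one _)

lemma gen_inv (i : ℕ) : (gen i)⁻¹ = gen i :=
  inv_eq_of_mul_eq_one_right (gen_mul_self i)

@[simp]
lemma aWord_elim0 (i : Fin 0 → ℕ) : aWord i = 1 := rfl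

lemma aWord_cons {k : ℕ} (c : ℕ) (i : Fin k → ℕ) : aWord (Fin.cons c i) = gen c * aWord i := by
  simp [aWord, List.ofFn_succ]

lemma aWord_snoc {k : ℕ} (i : Fin k → ℕ) (c : ℕ) : aWord (Fin.snoc i c) = aWord i * gen c := by
  rw [aWord, List.ofFn_succ', List.concat_eq_append, List.prod_append]
  simp [aWord]

lemma aWord_append {k k' : ℕ} (i : Fin k → ℕ) (f : Fin k' → ℕ) :
    aWord (Fin.append i f) = aWord i * aWord f := by
  simp [aWord, List.ofFn_add]

lemma permEndo_aWord (σ : ℕ → ℕ) {k : ℕ} (i : Fin k → ℕ) :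
    permEndo σ (aWord i) = aWord (σ ∘ i) := by
  simp [aWord, map_list_prod, List.map_ofFn, permEndo, gen, Function.comp_def]

lemma exists_aWord_eq (x : FreeZ2) : ∃ (k : ℕ) (i : Fin k → ℕ), aWord i = x := by
  induction x using Monoid.CoprodI.induction_on with
  | one => exact ⟨0, Fin.elim0, rfl⟩
  | of n m =>
    obtain rfl | rfl : m = 1 ∨ m = Multiplicative.ofAdd (1 : ZMod 2) := by decide +revert
    · exact ⟨0, Fin.elim0, (map_one _).symm⟩
    · exact ⟨1, fun _ => n, by simp [aWord, gen]⟩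
  | mul x y hx hy =>
    obtain ⟨k, i, rfl⟩ := hx
    obtain ⟨k', f, rfl⟩ := hy
    exact ⟨k + k', Fin.append i f, aWord_append i f⟩

def labelWord {k l : ℕ} (i : Fin k → ℕ) (j : Fin l → ℕ) : FreeZ2 := aWord i * (aWord j)⁻¹

lemma labelWord_elim0 {k : ℕ} (i : Fin k → ℕ) (j : Fin 0 → ℕ) : labelWord i j = aWord i := by
  simp [labelWord]

lemma labelWord_swap {k l : ℕ} (i : Fin k → ℕ) (j : Fin l → ℕ) :
    labelWord j i = (labelWord i j)⁻¹ := by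
  simp [labelWord]

lemma labelWord_mul_labelWord {k l l' : ℕ} (i : Fin k → ℕ) (h : Fin l → ℕ) (g : Fin l' → ℕ) :
    labelWord i h * labelWord h g = labelWord i g := by
  simp [labelWord, mul_assoc]

lemma labelWord_append {k l k' l' : ℕ} (i : Fin k → ℕ) (j : Fin l → ℕ) (f : Fin k' → ℕ)
    (g : Fin l' → ℕ) :
    labelWord (Fin.append i f) (Fin.append j g) =
      aWord i * labelWord f g * (aWord i)⁻¹ * labelWord i j := by
  simp [labelWord, aWord_append, mul_assoc]

lemma labelWord_cons_left {k l : ℕ} (c : ℕ) (i : Fin k → ℕ) (j : Fin l → ℕ) :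
    labelWord (Fin.cons c i) j = gen c * labelWord i (Fin.cons c j) * (gen c)⁻¹ := by
  simp [labelWord, aWord_cons, mul_assoc, gen_inv, gen_mul_self]

lemma labelWord_cons_right {k l : ℕ} (c : ℕ) (i : Fin k → ℕ) (j : Fin l → ℕ) :
    labelWord i (Fin.cons c j) = gen c * labelWord (Fin.cons c i) j * (gen c)⁻¹ := by
  simp [labelWord, aWord_cons, ← mul_assoc, gen_inv, gen_mul_self]

lemma labelWord_snoc_left {k l : ℕ} (i : Fin k → ℕ) (c : ℕ) (j : Fin l → ℕ) :
    labelWord (Fin.snoc i c) j = labelWord i (Fin.snoc j c) := by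
  simp [labelWord, aWord_snoc, mul_assoc, gen_inv]

lemma permEndo_labelWord (σ : ℕ → ℕ) {k l : ℕ} (i : Fin k → ℕ) (j : Fin l → ℕ) :
    permEndo σ (labelWord i j) = labelWord (σ ∘ i) (σ ∘ j) := by
  simp [labelWord, permEndo_aWord]

lemma exists_perm_eqOn_of_injOn (E : Finset ℕ) {ψ : ℕ → ℕ} (hψ : Set.InjOn ψ E) :
    ∃ σ : Equiv.Perm ℕ, FinitelySupported σ ∧ Set.EqOn σ ψ E := by
  obtain ⟨M, hM⟩ := Finset.exists_nat_subset_range (E ∪ E.image ψ)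
  have hMapsTo : Set.MapsTo (ψ ∘ Subtype.val) {x : Finset.range M | x.1 ∈ E} (Finset.range M) :=
    fun x hx => hM (Finset.mem_union_right _ (Finset.mem_image_of_mem ψ hx))
  have hInjOn : Set.InjOn (ψ ∘ Subtype.val) {x : Finset.range M | x.1 ∈ E} :=
    fun x hx y hy hxy => Subtype.ext (hψ hx hy hxy)
  obtain ⟨g, hg⟩ := hMapsTo.exists_equiv_extend_of_card_eq (Fintype.card_coe _) hInjOn
  refine ⟨Equiv.Perm.ofSubtype g, (Finset.range M).finite_toSet.subset fun x hx => ?_,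
    fun x hx => ?_⟩
  · by_contra hxM
    exact hx (Equiv.Perm.ofSubtype_apply_of_not_mem g hxM)
  · have hxM : x ∈ Finset.range M := hM (Finset.mem_union_left _ hx)
    rw [Equiv.Perm.ofSubtype_apply_of_mem g hxM]
    exact hg ⟨x, hxM⟩ hx

lemma exists_injOn_comp_eq_of_ker_eq {α β : Type*} {f f' : α → β}
    (h : Setoid.ker f = Setoid.ker f') :
    ∃ τ : β → β, Set.InjOn τ (Set.range f) ∧ τ ∘ f = f' := by
  have hf' : f'.FactorsThrough f := fun a b hab => by
    rw [← Setoid.ker_def, ← h, Setoid.ker_def]; exact hab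
  have hτ : Function.extend f f' id ∘ f = f' := funext (hf'.extend_apply id)
  refine ⟨Function.extend f f' id, ?_, hτ⟩
  rintro _ ⟨a, rfl⟩ _ ⟨b, rfl⟩ hab
  rw [← Setoid.ker_def, h, Setoid.ker_def]
  rwa [hf'.extend_apply, hf'.extend_apply] at hab

def IsPermInvariant (N : Set FreeZ2) : Prop :=
  ∀ σ : Equiv.Perm ℕ, FinitelySupported ⇑σ → permEndo ⇑σ '' N = N

lemma labelWord_comp_mem_of_injOn {N : Set FreeZ2} (hinv : IsPermInvariant N)
    {k l : ℕ} {i : Fin k → ℕ} {j : Fin l → ℕ} {τ : ℕ → ℕ}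
    (hτ : Set.InjOn τ (Set.range (Sum.elim i j))) (hw : labelWord i j ∈ N) :
    labelWord (τ ∘ i) (τ ∘ j) ∈ N := by
  obtain ⟨σ, hσ, hστ⟩ := exists_perm_eqOn_of_injOn (Finset.univ.image (Sum.elim i j))
    (by simpa using hτ)
  have hστ' : ∀ x, σ (Sum.elim i j x) = τ (Sum.elim i j x) := fun x =>
    hστ (Finset.mem_image_of_mem _ (Finset.mem_univ x))
  have hi : σ ∘ i = τ ∘ i := funext fun a => hστ' (.inl a)
  have hj : σ ∘ j = τ ∘ j := funext fun b => hστ' (.inr b)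
  rw [← hi, ← hj, ← permEndo_labelWord, ← hinv σ hσ]
  exact Set.mem_image_of_mem _ hw

lemma labelWord_mem_of_kerPart_eq {N : Set FreeZ2} (hinv : IsPermInvariant N)
    {k l : ℕ} {i i' : Fin k → ℕ} {j j' : Fin l → ℕ}
    (hker : kerPart i j = kerPart i' j') (hw : labelWord i j ∈ N) : labelWord i' j' ∈ N := by
  obtain ⟨τ, hτ, hτij⟩ := exists_injOn_comp_eq_of_ker_eq hker
  rw [Sum.comp_elim] at hτij
  obtain ⟨rfl, rfl⟩ := Sum.elim_eq_iff.mp hτij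
  exact labelWord_comp_mem_of_injOn hinv hτ hw

lemma BasicRot.exists_labelWord_mem {N : Subgroup FreeZ2} (hnorm : N.Normal)
    {s t : Σ k l : ℕ, Part k l} (hst : BasicRot s t)
    (hs : ∃ i j, kerPart i j = s.2.2 ∧ labelWord i j ∈ N) :
    ∃ i j, kerPart i j = t.2.2 ∧ labelWord i j ∈ N := by
  obtain ⟨i, j, hker, hw⟩ := hs
  cases hst with
  | uld p =>
    refine ⟨Fin.tail i, Fin.cons (i 0) j, ?_, ?_⟩
    · rw [← rotULD_kerPart_cons, Fin.cons_self_tail, hker]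
    · rw [labelWord_cons_right, Fin.cons_self_tail]
      exact hnorm.conj_mem _ hw _
  | dlu p =>
    refine ⟨Fin.cons (j 0) i, Fin.tail j, ?_, ?_⟩
    · rw [← rotDLU_kerPart_cons, Fin.cons_self_tail, hker]
    · rw [labelWord_cons_left, Fin.cons_self_tail]
      exact hnorm.conj_mem _ hw _
  | urd p =>
    refine ⟨Fin.init i, Fin.snoc j (i (Fin.last _)), ?_, ?_⟩
    · rw [← rotURD_kerPart_snoc, Fin.snoc_init_self, hker]
    · rwa [← labelWord_snoc_left, Fin.snoc_init_self]
  | dru p =>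
    refine ⟨Fin.snoc i (j (Fin.last _)), Fin.init j, ?_, ?_⟩
    · rw [← rotDRU_kerPart_snoc, Fin.snoc_init_self, hker]
    · rwa [labelWord_snoc_left, Fin.snoc_init_self]

lemma exists_labelWord_mem_of_mem_rotSetOf {N : Subgroup FreeZ2} (hnorm : N.Normal) {k l : ℕ}
    {p : Part k l} (hp : p ∈ rotSetOf N k l) :
    ∃ i j, kerPart i j = p ∧ labelWord i j ∈ N := by
  obtain ⟨k', i₀, hi₀, hrot⟩ := hp
  suffices ∀ t, IsRotationOf t ⟨k', 0, kerPart0 i₀⟩ →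
      ∃ i j, kerPart i j = t.2.2 ∧ labelWord i j ∈ N from this _ hrot
  intro t ht
  induction ht with
  | refl => exact ⟨i₀, Fin.elim0, kerPart_elim0 i₀ _, by rwa [labelWord_elim0]⟩
  | tail _ hst ih => exact hst.exists_labelWord_mem hnorm ih

lemma exists_isRotationOf_kerPart0 (k l : ℕ) (i : Fin k → ℕ) (j : Fin l → ℕ) :
    ∃ (m : ℕ) (w : Fin m → ℕ), aWord w = labelWord i j ∧
      IsRotationOf ⟨k, l, kerPart i j⟩ ⟨m, 0, kerPart0 w⟩ := by
  induction l generalizing k with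
  | zero => exact ⟨k, i, (labelWord_elim0 i j).symm, by rw [kerPart_elim0]; exact .refl⟩
  | succ l ih =>
    rw [← Fin.snoc_init_self j, ← labelWord_snoc_left, ← rotURD_kerPart_snoc]
    obtain ⟨m, w, hw, hrot⟩ := ih _ (Fin.snoc i (j (Fin.last l))) (Fin.init j)
    exact ⟨m, w, hw, hrot.tail (BasicRot.urd _)⟩

lemma kerPart_mem_rotSetOf {N : Set FreeZ2} {k l : ℕ} {i : Fin k → ℕ} {j : Fin l → ℕ}
    (hw : labelWord i j ∈ N) : kerPart i j ∈ rotSetOf N k l := by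
  obtain ⟨m, w, hw', hrot⟩ := exists_isRotationOf_kerPart0 k l i j
  exact ⟨m, w, hw' ▸ hw, hrot⟩

lemma kerPart_mem_rotSetOf_iff {N : Subgroup FreeZ2} (hnorm : N.Normal)
    (hinv : IsPermInvariant (N : Set FreeZ2)) {k l : ℕ} (i : Fin k → ℕ) (j : Fin l → ℕ) :
    kerPart i j ∈ rotSetOf N k l ↔ labelWord i j ∈ N := by
  refine ⟨fun hp => ?_, kerPart_mem_rotSetOf⟩
  obtain ⟨i', j', hker, hw⟩ := exists_labelWord_mem_of_mem_rotSetOf hnorm hp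
  exact labelWord_mem_of_kerPart_eq hinv hker hw

lemma kerPart0_mem_rotSetOf_iff {N : Subgroup FreeZ2} (hnorm : N.Normal)
    (hinv : IsPermInvariant (N : Set FreeZ2)) {k : ℕ} (i : Fin k → ℕ) :
    kerPart0 i ∈ rotSetOf N k 0 ↔ aWord i ∈ N := by
  rw [← kerPart_elim0 i Fin.elim0, kerPart_mem_rotSetOf_iff hnorm hinv, labelWord_elim0]

lemma compPart_kerPart {k l l' : ℕ} {i : Fin k → ℕ} {h : Fin l → ℕ} {g : Fin l' → ℕ}
    (hmid : ∀ a b, i a = g b → ∃ m, h m = i a) :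
    compPart (kerPart i h) (kerPart h g) = kerPart i g := by
  set J := middleJoin (kerPart i h) (kerPart h g)
  have hJ : J ≤ Setoid.ker (Sum.elim i (Sum.elim h g)) := by
    refine Setoid.eqvGen_le ?_
    rintro _ _ (⟨u, v, huv, rfl, rfl⟩ | ⟨u, v, huv, rfl, rfl⟩) <;>
      rcases u with _ | _ <;> rcases v with _ | _ <;> exact huv
  have hp : ∀ u v, Sum.elim i h u = Sum.elim i h v → J (topIncl u) (topIncl v) :=
    fun u v huv => .rel _ _ (.inl ⟨u, v, huv, rfl, rfl⟩)
  have hq : ∀ u v, Sum.elim h g u = Sum.elim h g v → J (botIncl u) (botIncl v) :=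
    fun u v huv => .rel _ _ (.inr ⟨u, v, huv, rfl, rfl⟩)
  ext x y
  refine ⟨fun hxy => ?_, fun hxy => ?_⟩ <;> rcases x with a | b <;> rcases y with a' | b'
  any_goals exact hJ hxy
  · exact hp (.inl a) (.inl a') hxy
  · obtain ⟨m, hm⟩ := hmid a b' hxy
    exact J.trans (hp (.inl a) (.inr m) hm.symm) (hq (.inl m) (.inr b') (hm.trans hxy))
  · obtain ⟨m, hm⟩ := hmid a' b hxy.symm
    exact J.trans (hq (.inr b) (.inl m) (hxy.trans hm.symm)) (hp (.inr m) (.inl a') hm)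
  · exact hq (.inr b) (.inr b') hxy

lemma exists_kerPart_eq_of_ker_eq {k l l' : ℕ} (i : Fin k → ℕ) {h h' : Fin l → ℕ}
    (g : Fin l' → ℕ) (hh : Setoid.ker h' = Setoid.ker h) :
    ∃ g' : Fin l' → ℕ, kerPart h g' = kerPart h' g ∧ ∀ a b, i a = g' b → ∃ m, h m = i a := by
  obtain ⟨M, hM⟩ := (Set.finite_range (Sum.elim i h)).bddAbove
  have hiM : ∀ a, i a ≤ M := fun a => hM (Set.mem_range_self (Sum.inl a))
  have hhM : ∀ m, h m ≤ M := fun m => hM (Set.mem_range_self (Sum.inr m))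
  obtain ⟨τ₀, hτ₀, hτ₀h'⟩ := exists_injOn_comp_eq_of_ker_eq hh
  -- values of `g` outside the range of `h'` are moved beyond all values of `i` and `h`
  set τ := (Set.range h').piecewise τ₀ (· + (M + 1))
  have hτh' : ∀ m, τ (h' m) = h m := fun m =>
    (Set.piecewise_eq_of_mem _ _ _ (Set.mem_range_self m)).trans (congrFun hτ₀h' m)
  have hτ : Function.Injective τ := by
    refine (Set.injective_piecewise_iff _).mpr ⟨hτ₀, (add_left_injective _).injOn, ?_⟩
    rintro _ ⟨m, rfl⟩ y -
    rw [← Function.comp_apply (f := τ₀), hτ₀h']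
    have := hhM m
    omega
  refine ⟨τ ∘ g, ?_, fun a b hab => ?_⟩
  · have hker : kerPart (τ ∘ h') (τ ∘ g) = kerPart h' g := kerPart_comp_of_injOn hτ.injOn
    rwa [show τ ∘ h' = h from funext hτh'] at hker
  · by_cases hgb : g b ∈ Set.range h'
    · obtain ⟨m, hm⟩ := hgb
      exact ⟨m, by rw [hab, Function.comp_apply, ← hm, hτh']⟩
    · have hτg : τ (g b) = g b + (M + 1) := Set.piecewise_eq_of_notMem _ _ _ hgb
      have := hiM a
      rw [hab, Function.comp_apply, hτg] at this
      omega

lemma compPart_mem_rotSetOf {N : Subgroup FreeZ2} (hnorm : N.Normal)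
    (hinv : IsPermInvariant (N : Set FreeZ2)) {k l l' : ℕ} {p : Part k l} {q : Part l l'}
    (hp : p ∈ rotSetOf N k l) (hq : q ∈ rotSetOf N l l') (hpq : Compatible p q) :
    compPart p q ∈ rotSetOf N k l' := by
  obtain ⟨i, h, rfl, hw⟩ := exists_labelWord_mem_of_mem_rotSetOf hnorm hp
  obtain ⟨h', g, rfl, hw'⟩ := exists_labelWord_mem_of_mem_rotSetOf hnorm hq
  have hh : Setoid.ker h' = Setoid.ker h := hpq.symm
  obtain ⟨g', hker, hmid⟩ := exists_kerPart_eq_of_ker_eq i g hh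
  rw [← hker, compPart_kerPart hmid]
  refine kerPart_mem_rotSetOf ?_
  rw [← labelWord_mul_labelWord i h g']
  exact N.mul_mem hw (labelWord_mem_of_kerPart_eq hinv hker.symm hw')

/-- For every `S_∞`-invariant normal subgroup `N ⊴ ℤ₂^{*∞}`,
the set of rotations of partitions `ker(i)` with `a_i ∈ N` is a skew category
of partitions whose associated subgroup `F_∞` equals `N`. -/
theorem rotSetOf_isSkewCategory (N : Subgroup FreeZ2) (hnorm : N.Normal)
    (hinv : ∀ σ : Equiv.Perm ℕ, FinitelySupported ⇑σ →
      permEndo ⇑σ '' (N : Set FreeZ2) = (N : Set FreeZ2)) :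
    IsSkewCategory (rotSetOf (N : Set FreeZ2)) ∧
      Finfty (rotSetOf (N : Set FreeZ2)) = (N : Set FreeZ2) := by
  have hmem := @kerPart_mem_rotSetOf_iff N hnorm hinv
  have hmem0 := @kerPart0_mem_rotSetOf_iff N hnorm hinv
  refine ⟨⟨?pair, ?id, ?invol, ?tensor, ?comp⟩, ?Finfty⟩
  case pair => exact kerPart_mem_rotSetOf (by simp [labelWord, aWord, gen_mul_self])
  case id => exact kerPart_mem_rotSetOf (by simp [labelWord])
  case invol =>
    intro k l _ hp
    obtain ⟨i, j, rfl, hw⟩ := exists_labelWord_mem_of_mem_rotSetOf hnorm hp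
    rw [invol_kerPart, hmem, labelWord_swap]
    exact inv_mem hw
  case tensor =>
    rintro k l k' l' _ _ i j f g hp hq rfl rfl
    rw [hmem] at hp hq ⊢
    rw [labelWord_append]
    exact N.mul_mem (hnorm.conj_mem _ hq _) hp
  case comp => exact fun hp hq hpq => compPart_mem_rotSetOf hnorm hinv hp hq hpq
  case Finfty =>
    ext x
    refine ⟨fun ⟨k, i, hi, hx⟩ => hx ▸ (hmem0 i).mp hi, fun hx => ?_⟩
    obtain ⟨k, i, rfl⟩ := exists_aWord_eq x
    exact ⟨k, i, (hmem0 i).mpr hx, rfl⟩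

end GTQG
end
end
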